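/- arXiv:2605.19880 — 2 statements merged into one kernel-verified Lean document; each statement's English description precedes it below -/
import Mathlib

section
/- If A = A' ⊗ A'' is a tensor product of graded Artinian K-algebras and there exist nonzero kernel elements of the degree-1 multiplication maps μ_{L'} in degree i on A' and μ_{L''} in degree j on A'', and moreover dim_K A_{i+j} ≤ dim_K A_{i+j+1}, then the multiplication map μ_{L'+L''} : A_{i+j} → A_{i+j+1} is not injective and not surjective (it fails to have maximal rank). -/
/-!
If `α L' = 0` and `β L'' = 0`, then `α ⊗ β` is a nonzero element of degree `i + j` killed by
`L' ⊗ 1 + 1 ⊗ L''`, so this multiplication map is not injective. A linear map that is not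
injective cannot be surjective onto a space of at least the same finite dimension.
-/

open TensorProduct

/-- The degree-`n` graded piece of `A' ⊗[K] A''`, namely `⊕_{p+q=n} A'_p ⊗ A''_q`,
realized as the span of the images of `A'_p ⊗ A''_{n-p}` for `0 ≤ p ≤ n`. -/
noncomputable def tensorPiece {K A' A'' : Type*} [Field K] [CommRing A'] [CommRing A'']
    [Algebra K A'] [Algebra K A''] (𝒜' : ℕ → Submodule K A') (𝒜'' : ℕ → Submodule K A'')
    (n : ℕ) : Submodule K (A' ⊗[K] A'') :=
  ⨆ p ∈ Finset.range (n + 1),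
    LinearMap.range (TensorProduct.mapIncl (𝒜' p) (𝒜'' (n - p)))

open Module

theorem TensorProduct.tmul_ne_zero {K V W : Type*} [Field K] [AddCommGroup V] [Module K V]
    [AddCommGroup W] [Module K W] {a : V} {b : W} (ha : a ≠ 0) (hb : b ≠ 0) :
    a ⊗ₜ[K] b ≠ 0 := by
  obtain ⟨f, hf⟩ : ∃ f : Dual K V, f a ≠ 0 := by
    simpa [not_forall] using mt (forall_dual_apply_eq_zero_iff K a).1 ha
  obtain ⟨g, hg⟩ : ∃ g : Dual K W, g b ≠ 0 := by
    simpa [not_forall] using mt (forall_dual_apply_eq_zero_iff K b).1 hb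
  intro h
  have hfg : TensorProduct.lid K K (map f g (a ⊗ₜ[K] b)) = f a * g b := by simp
  rw [h, map_zero, map_zero] at hfg
  exact mul_ne_zero hf hg hfg.symm

theorem LinearMap.exists_forall_apply_ne_of_finrank_le {K M N : Type*} [Field K]
    [AddCommGroup M] [Module K M] [AddCommGroup N] [Module K N] (f : M →ₗ[K] N)
    {V : Submodule K M} {W : Submodule K N} [FiniteDimensional K V]
    (hVW : ∀ x ∈ V, f x ∈ W) (hdim : finrank K V ≤ finrank K W)
    (hker : ∃ x ∈ V, x ≠ 0 ∧ f x = 0) :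
    ∃ y ∈ W, ∀ x ∈ V, f x ≠ y := by
  set g : V →ₗ[K] W := f.restrict hVW
  obtain ⟨x, hxV, hx0, hfx⟩ := hker
  have hg : ¬ Function.Injective g := fun hinj =>
    hx0 (by simpa using (injective_iff_map_eq_zero g).1 hinj ⟨x, hxV⟩ (Subtype.ext hfx))
  by_contra! hsurj
  have hgsurj : Function.Surjective g := fun y => by
    obtain ⟨x, hx, hxy⟩ := hsurj y y.2
    exact ⟨⟨x, hx⟩, Subtype.ext hxy⟩
  have : FiniteDimensional K W := Module.Finite.of_surjective g hgsurj
  have hdim_eq : finrank K V = finrank K W :=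
    le_antisymm hdim (LinearMap.finrank_le_finrank_of_surjective hgsurj)
  exact hg ((LinearMap.injective_iff_surjective_of_finrank_eq_finrank hdim_eq).2 hgsurj)

section tensorPiece

variable {K A' A'' : Type*} [Field K] [CommRing A'] [CommRing A''] [Algebra K A'] [Algebra K A'']
  (𝒜' : ℕ → Submodule K A') (𝒜'' : ℕ → Submodule K A'')

theorem tmul_mem_tensorPiece {n p : ℕ} (hp : p ≤ n) {a : A'} {b : A''} (ha : a ∈ 𝒜' p)
    (hb : b ∈ 𝒜'' (n - p)) : a ⊗ₜ[K] b ∈ tensorPiece 𝒜' 𝒜'' n := by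
  apply Submodule.mem_iSup_of_mem p
  apply Submodule.mem_iSup_of_mem (Finset.mem_range.2 (Nat.lt_succ_of_le hp))
  exact ⟨(⟨a, ha⟩ : 𝒜' p) ⊗ₜ[K] (⟨b, hb⟩ : 𝒜'' (n - p)), rfl⟩

variable [SetLike.GradedMonoid 𝒜'] [SetLike.GradedMonoid 𝒜'']

theorem mul_tmul_mem_tensorPiece {n d' d'' : ℕ} {a : A'} {b : A''} (ha : a ∈ 𝒜' d')
    (hb : b ∈ 𝒜'' d'') {x : A' ⊗[K] A''} (hx : x ∈ tensorPiece 𝒜' 𝒜'' n) :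
    x * (a ⊗ₜ[K] b) ∈ tensorPiece 𝒜' 𝒜'' (n + d' + d'') := by
  suffices tensorPiece 𝒜' 𝒜'' n ≤ (tensorPiece 𝒜' 𝒜'' (n + d' + d'')).comap
      (LinearMap.mulRight K (a ⊗ₜ[K] b)) from this hx
  refine iSup₂_le fun p hp => ?_
  rintro _ ⟨w, rfl⟩
  induction w with
  | zero => simp
  | add u v hu hv => simpa using add_mem hu hv
  | tmul u v =>
    have hp : p ≤ n := Nat.le_of_lt_succ (Finset.mem_range.1 hp)
    have hvb : (v : A'') * b ∈ 𝒜'' (n + d' + d'' - (p + d')) := by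
      rw [show n + d' + d'' - (p + d') = n - p + d'' by omega]
      exact SetLike.mul_mem_graded v.2 hb
    simpa [mapIncl] using
      tmul_mem_tensorPiece 𝒜' 𝒜'' (by omega) (SetLike.mul_mem_graded u.2 ha) hvb

theorem mul_add_tmul_mem_tensorPiece {L' : A'} {L'' : A''} (hL' : L' ∈ 𝒜' 1)
    (hL'' : L'' ∈ 𝒜'' 1) {n : ℕ} {x : A' ⊗[K] A''} (hx : x ∈ tensorPiece 𝒜' 𝒜'' n) :
    x * (L' ⊗ₜ[K] (1 : A'') + (1 : A') ⊗ₜ[K] L'') ∈ tensorPiece 𝒜' 𝒜'' (n + 1) := by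
  rw [mul_add]
  exact add_mem
    (mul_tmul_mem_tensorPiece 𝒜' 𝒜'' hL' SetLike.GradedOne.one_mem hx)
    (mul_tmul_mem_tensorPiece 𝒜' 𝒜'' SetLike.GradedOne.one_mem hL'' hx)

end tensorPiece

/-- If `A = A' ⊗ A''` is a tensor product of graded Artinian `K`-algebras, there are
nonzero kernel elements of `μ_{L'}` in degree `i` on `A'` and of `μ_{L''}` in degree `j`
on `A''`, and `dim_K A_{i+j} ≤ dim_K A_{i+j+1}`, then
`μ_{L'+L''} : A_{i+j} → A_{i+j+1}` is neither injective nor surjective. -/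
theorem stmt2 {K A' A'' : Type*} [Field K]
    [CommRing A'] [CommRing A''] [Algebra K A'] [Algebra K A'']
    (𝒜' : ℕ → Submodule K A') (𝒜'' : ℕ → Submodule K A'')
    [GradedAlgebra 𝒜'] [GradedAlgebra 𝒜'']
    [FiniteDimensional K A'] [FiniteDimensional K A'']
    (i j : ℕ) (L' : A') (L'' : A'') (hL' : L' ∈ 𝒜' 1) (hL'' : L'' ∈ 𝒜'' 1)
    (hker' : ∃ α ∈ 𝒜' i, α ≠ 0 ∧ α * L' = 0)
    (hker'' : ∃ β ∈ 𝒜'' j, β ≠ 0 ∧ β * L'' = 0)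
    (hdim : Module.finrank K (tensorPiece 𝒜' 𝒜'' (i + j)) ≤
      Module.finrank K (tensorPiece 𝒜' 𝒜'' (i + j + 1))) :
    (∃ x ∈ tensorPiece 𝒜' 𝒜'' (i + j), x ≠ 0 ∧
        x * (L' ⊗ₜ[K] (1 : A'') + (1 : A') ⊗ₜ[K] L'') = 0) ∧
      (∃ y ∈ tensorPiece 𝒜' 𝒜'' (i + j + 1), ∀ x ∈ tensorPiece 𝒜' 𝒜'' (i + j),
        x * (L' ⊗ₜ[K] (1 : A'') + (1 : A') ⊗ₜ[K] L'') ≠ y) := by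
  obtain ⟨α, hα, hα0, hαL⟩ := hker'
  obtain ⟨β, hβ, hβ0, hβL⟩ := hker''
  have hker : ∃ x ∈ tensorPiece 𝒜' 𝒜'' (i + j), x ≠ 0 ∧
      x * (L' ⊗ₜ[K] (1 : A'') + (1 : A') ⊗ₜ[K] L'') = 0 := by
    refine ⟨α ⊗ₜ[K] β, tmul_mem_tensorPiece 𝒜' 𝒜'' (Nat.le_add_right i j) hα ?_,
      TensorProduct.tmul_ne_zero hα0 hβ0, ?_⟩
    · simpa using hβ
    · simp [mul_add, hαL, hβL]
  exact ⟨hker, (LinearMap.mulRight K _).exists_forall_apply_ne_of_finrank_le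
    (fun _ hx => mul_add_tmul_mem_tensorPiece 𝒜' 𝒜'' hL' hL'' hx) hdim hker⟩
end

section
/- Let α = a_1y_1 + a_2y_2 + a_3y_3 and β = a_4y_4 + a_5y_5 + a_6y_6 in A = K[y_1,...,y_6]/(y_1^2,...,y_6^2, y_1y_2 - y_1y_3 + y_2y_3, y_4y_5 - y_4y_6 + y_5y_6), char K = 0. Then α^3 = 0 and β^3 = 0 in A, and consequently (α^2 - αβ + β^2)(α + β) = 0, so α^2 - αβ + β^2 ∈ ker(μ_{α+β} : A_2 → A_3). -/
open MvPolynomial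

/-- The defining ideal of the Artinian Orlik–Terao algebra of the bowtie graph. -/
noncomputable def bowtieIdeal (K : Type*) [Field K] : Ideal (MvPolynomial (Fin 6) K) :=
  Ideal.span ((Set.range fun k : Fin 6 => (X k : MvPolynomial (Fin 6) K) ^ 2) ∪
    {X 0 * X 1 - X 0 * X 2 + X 1 * X 2, X 3 * X 4 - X 3 * X 5 + X 4 * X 5})

lemma cube_zero' {R : Type*} [CommRing R] (a b c x y z : R)
    (hx : x^2 = 0) (hy : y^2 = 0) (hz : z^2 = 0) (h : x*y - x*z + y*z = 0) :
    (a*x + b*y + c*z)^3 = 0 := by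
  linear_combination (a^3*x + 3*a^2*b*y + 3*a^2*c*z)*hx +
    (3*a*b^2*x + b^3*y + 3*b^2*c*z)*hy +
    (3*a*c^2*x + 3*b*c^2*y + c^3*z + 6*a*b*c*(x-y))*hz + 6*a*b*c*z*h

/-- In the AOT algebra `A` of the bowtie graph, for `α = a_1y_1 + a_2y_2 + a_3y_3`
and `β = a_4y_4 + a_5y_5 + a_6y_6` one has `α^3 = 0`, `β^3 = 0`, and consequently
`(α^2 - αβ + β^2)(α + β) = 0`, so `α^2 - αβ + β^2 ∈ ker(μ_{α+β} : A_2 → A_3)`. -/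
theorem stmt11 {K : Type*} [Field K] [CharZero K] (a : Fin 6 → K) :
    (Ideal.Quotient.mk (bowtieIdeal K) (C (a 0) * X 0 + C (a 1) * X 1 + C (a 2) * X 2)) ^ 3
        = 0 ∧
    (Ideal.Quotient.mk (bowtieIdeal K) (C (a 3) * X 3 + C (a 4) * X 4 + C (a 5) * X 5)) ^ 3
        = 0 ∧
    (let α := Ideal.Quotient.mk (bowtieIdeal K) (C (a 0) * X 0 + C (a 1) * X 1 + C (a 2) * X 2)
     let β := Ideal.Quotient.mk (bowtieIdeal K) (C (a 3) * X 3 + C (a 4) * X 4 + C (a 5) * X 5)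
     (α ^ 2 - α * β + β ^ 2) * (α + β) = 0) := by
  set mk := Ideal.Quotient.mk (bowtieIdeal K) with hmk
  have hsq : ∀ k : Fin 6, mk (X k) ^ 2 = 0 := by
    intro k
    rw [← map_pow, hmk, Ideal.Quotient.eq_zero_iff_mem]
    exact Ideal.subset_span (Or.inl ⟨k, rfl⟩)
  have h1 : mk (X 0) * mk (X 1) - mk (X 0) * mk (X 2) + mk (X 1) * mk (X 2) = 0 := by
    rw [← map_mul, ← map_mul, ← map_mul, ← map_sub, ← map_add, hmk,
      Ideal.Quotient.eq_zero_iff_mem]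
    exact Ideal.subset_span (Or.inr (by left; rfl))
  have h2 : mk (X 3) * mk (X 4) - mk (X 3) * mk (X 5) + mk (X 4) * mk (X 5) = 0 := by
    rw [← map_mul, ← map_mul, ← map_mul, ← map_sub, ← map_add, hmk,
      Ideal.Quotient.eq_zero_iff_mem]
    exact Ideal.subset_span (Or.inr (by right; rfl))
  have hα : mk (C (a 0) * X 0 + C (a 1) * X 1 + C (a 2) * X 2) ^ 3 = 0 := by
    rw [map_add, map_add, map_mul, map_mul, map_mul]
    exact cube_zero' _ _ _ _ _ _ (hsq 0) (hsq 1) (hsq 2) h1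
  have hβ : mk (C (a 3) * X 3 + C (a 4) * X 4 + C (a 5) * X 5) ^ 3 = 0 := by
    rw [map_add, map_add, map_mul, map_mul, map_mul]
    exact cube_zero' _ _ _ _ _ _ (hsq 3) (hsq 4) (hsq 5) h2
  exact ⟨hα, hβ, by dsimp only; linear_combination hα + hβ⟩
end
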